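/- arXiv:2503.01712 — 2 statements merged into one kernel-verified Lean document; each statement's English description precedes it below -/
import Mathlib

section
/- Stability of the explicit Euler scheme below the CFL threshold: if Δt > 0 and Δt · c_n < 2, then for every (n+1)×(n+1) complex matrix ρ₀ there exist an (n+1)×(n+1) matrix ρ∞ whose (k,m) entry vanishes unless both k < l and m < l, and constants C ≥ 0 and r ∈ [0,1), such that ‖E^p(ρ₀) − ρ∞‖ ≤ C·r^p for all p ∈ ℕ (Frobenius norm); in particular the iterates E^p(ρ₀) converge to ρ∞ at a geometric rate. -/
open Matrix

/-- The truncated annihilation matrix on `ℂ^{n+1}`: `a e_k = √k e_{k-1}`. -/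
noncomputable def ann (n : ℕ) : Matrix (Fin (n+1)) (Fin (n+1)) ℂ :=
  Matrix.of fun i j => if (i : ℕ) + 1 = (j : ℕ) then ((Real.sqrt (j : ℕ) : ℝ) : ℂ) else 0

/-- The descending factorial `c_k = k(k-1)⋯(k-l+1)` as a real number. -/
noncomputable def cfac (l k : ℕ) : ℝ := (Nat.descFactorial k l : ℝ)

/-- The explicit Euler scheme for the `l`-photon loss Lindbladian,
`E(ρ) = ρ + Δt (L ρ Lᴴ − ½(LᴴL ρ + ρ LᴴL))` with `L = a^l`. -/
noncomputable def euler (n l : ℕ) (Δt : ℝ)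
    (ρ : Matrix (Fin (n+1)) (Fin (n+1)) ℂ) : Matrix (Fin (n+1)) (Fin (n+1)) ℂ :=
  ρ + (Δt : ℂ) • ((ann n ^ l) * ρ * (ann n ^ l)ᴴ
      - (2⁻¹ : ℂ) • ((ann n ^ l)ᴴ * (ann n ^ l) * ρ + ρ * ((ann n ^ l)ᴴ * (ann n ^ l))))

/-- The Frobenius norm of a complex matrix. -/
noncomputable def frobNorm {m : ℕ} (A : Matrix (Fin m) (Fin m) ℂ) : ℝ :=
  Real.sqrt (∑ i, ∑ j, ‖A i j‖ ^ 2)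

/-!
In the Fock basis `E` acts entrywise: `E(ρ)ₖₘ = λₖₘ ρₖₘ + μₖₘ ρ_{k+l,m+l}` with
`λₖₘ = 1 - Δt (c_k + c_m) / 2` and `μₖₘ = Δt √(c_{k+l} c_{m+l}) ≥ 0`. Call `(k, m)` active when
`l ≤ k` or `l ≤ m`. Active entries only feed on active entries, and on them the CFL condition
gives `|λₖₘ| ≤ q < 1`. Weighting entry `(k, m)` by `ε^(k+m)` with `ε` small makes the feeding term
cost at most `(1 - q) / 2`, so active entries decay like `((1 + q) / 2)^p`. On passive entries
`λₖₘ = 1`, so the increments of every entry are controlled by active entries and are geometrically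
summable; the limit vanishes on active entries.
-/

open Filter Topology

lemma Fin.sum_ite_val_eq {M : Type*} [AddCommMonoid M] {N : ℕ} (s : ℕ) (g : Fin N → M) :
    ∑ t : Fin N, (if (t : ℕ) = s then g t else 0) = if h : s < N then g ⟨s, h⟩ else 0 := by
  split_ifs with h
  · simp_rw [← Fin.ext_iff (b := ⟨s, h⟩)]
    simp
  · exact Finset.sum_eq_zero fun t _ => if_neg (by omega)

namespace Matrix

variable {α : Type*} [Zero α] {M N : ℕ}

/-- Entries indexed by natural numbers, zero outside the matrix, so that the shift
`(k, m) ↦ (k + l, m + l)` needs no range conditions. -/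
def natEntry (A : Matrix (Fin M) (Fin N) α) (k m : ℕ) : α :=
  if h : k < M ∧ m < N then A ⟨k, h.1⟩ ⟨m, h.2⟩ else 0

@[simp]
lemma natEntry_val (A : Matrix (Fin M) (Fin N) α) (i : Fin M) (j : Fin N) :
    A.natEntry i j = A i j := by
  simp [natEntry]

lemma natEntry_of_lt (A : Matrix (Fin M) (Fin N) α) {k m : ℕ} (h : k < M ∧ m < N) :
    A.natEntry k m = A ⟨k, h.1⟩ ⟨m, h.2⟩ :=
  dif_pos h

lemma natEntry_of_not_lt (A : Matrix (Fin M) (Fin N) α) {k m : ℕ} (h : ¬(k < M ∧ m < N)) :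
    A.natEntry k m = 0 :=
  dif_neg h

end Matrix

lemma cfac_nonneg (l k : ℕ) : 0 ≤ cfac l k := Nat.cast_nonneg _

lemma cfac_mono (l : ℕ) : Monotone (cfac l) := fun _ _ h =>
  Nat.cast_le.2 (Nat.descFactorial_le l h)

lemma cfac_eq_zero_of_lt {l k : ℕ} (h : k < l) : cfac l k = 0 := by
  simp [cfac, Nat.descFactorial_eq_zero_iff_lt.2 h]

lemma cfac_pos_of_le {l k : ℕ} (h : l ≤ k) : 0 < cfac l k :=
  Nat.cast_pos.2 (Nat.pos_of_ne_zero (mt Nat.descFactorial_eq_zero_iff_lt.1 (not_lt.2 h)))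

lemma cfac_add_succ (l k : ℕ) : cfac (l + 1) (k + l + 1) = cfac l (k + l) * (k + l + 1) := by
  simp only [cfac, Nat.succ_descFactorial_succ]
  push_cast
  ring

section Annihilation

variable (n l : ℕ)

lemma ann_apply (i j : Fin (n+1)) :
    ann n i j = if (j : ℕ) = i + 1 then ((√(j : ℕ) : ℝ) : ℂ) else 0 := by
  simp only [ann, Matrix.of_apply, eq_comm]

lemma ann_pow_apply (i j : Fin (n+1)) :
    (ann n ^ l) i j = if (j : ℕ) = i + l then ((√(cfac l j) : ℝ) : ℂ) else 0 := by
  induction l generalizing j with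
  | zero => simp [Matrix.one_apply, Fin.ext_iff, eq_comm, cfac]
  | succ l ih =>
    simp only [pow_succ, Matrix.mul_apply, ih, ann_apply, ite_mul, zero_mul, Fin.sum_ite_val_eq]
    split_ifs with _ hj <;> try first | omega | simp
    rw [hj, cfac_add_succ, Real.sqrt_mul (cfac_nonneg _ _)]
    push_cast
    rfl

lemma star_ann_pow_apply (i j : Fin (n+1)) : star ((ann n ^ l) i j) = (ann n ^ l) i j := by
  rw [ann_pow_apply]
  split_ifs <;> simp

lemma sum_ann_pow_apply_mul (i : Fin (n+1)) (v : Fin (n+1) → ℂ) :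
    ∑ t, (ann n ^ l) i t * v t =
      if h : (i : ℕ) + l < n + 1 then ((√(cfac l (i + l)) : ℝ) : ℂ) * v ⟨i + l, h⟩ else 0 := by
  simp only [ann_pow_apply, ite_mul, zero_mul, Fin.sum_ite_val_eq]

lemma sum_ann_pow_apply_mul_left (j : Fin (n+1)) (v : Fin (n+1) → ℂ) :
    ∑ t, (ann n ^ l) t j * v t =
      if h : l ≤ (j : ℕ) then ((√(cfac l j) : ℝ) : ℂ) * v ⟨j - l, by omega⟩ else 0 := by
  have hiff : ∀ t : Fin (n+1), (j : ℕ) = t + l ↔ l ≤ (j : ℕ) ∧ (t : ℕ) = j - l := by omega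
  simp only [ann_pow_apply, hiff, ite_and, ite_mul, zero_mul, Finset.sum_ite_irrel,
    Fin.sum_ite_val_eq, Finset.sum_const_zero]
  split_ifs <;> first | rfl | omega

lemma conjTranspose_ann_pow_mul_ann_pow :
    (ann n ^ l)ᴴ * ann n ^ l = diagonal fun i : Fin (n+1) => ((cfac l i : ℝ) : ℂ) := by
  ext i j
  rw [mul_apply]
  simp only [conjTranspose_apply, star_ann_pow_apply]
  rw [sum_ann_pow_apply_mul_left]
  simp only [ann_pow_apply, diagonal_apply, Fin.ext_iff]
  split_ifs with hli hij hij <;> try omega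
  · rw [← hij, ← Complex.ofReal_mul, Real.mul_self_sqrt (cfac_nonneg _ _)]
  · simp
  · rw [cfac_eq_zero_of_lt (by omega), Complex.ofReal_zero]
  · rfl

lemma ann_pow_mul_mul_conjTranspose_apply (ρ : Matrix (Fin (n+1)) (Fin (n+1)) ℂ)
    (i j : Fin (n+1)) :
    (ann n ^ l * ρ * (ann n ^ l)ᴴ) i j =
      ((√(cfac l (i + l)) * √(cfac l (j + l)) : ℝ) : ℂ) * ρ.natEntry (i + l) (j + l) := by
  have hright (a : Fin (n+1)) : (ρ * (ann n ^ l)ᴴ) a j =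
      if h : (j : ℕ) + l < n + 1 then ((√(cfac l (j + l)) : ℝ) : ℂ) * ρ a ⟨j + l, h⟩ else 0 := by
    simp only [mul_apply, conjTranspose_apply, star_ann_pow_apply, mul_comm (ρ a _)]
    exact sum_ann_pow_apply_mul n l j (ρ a)
  rw [Matrix.mul_assoc, mul_apply, sum_ann_pow_apply_mul]
  simp only [hright, natEntry]
  split_ifs <;> first | omega | push_cast; ring

end Annihilation

section Euler

variable (l : ℕ) (Δt : ℝ)

noncomputable def diagCoeff (k m : ℕ) : ℝ := 1 - Δt * (cfac l k + cfac l m) / 2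

noncomputable def jumpCoeff (k m : ℕ) : ℝ := Δt * (√(cfac l (k + l)) * √(cfac l (m + l)))

noncomputable def dampingBound (n : ℕ) : ℝ := max (1 - Δt * cfac l l / 2) (Δt * cfac l n - 1)

variable {l Δt} (n : ℕ)

lemma euler_apply (ρ : Matrix (Fin (n+1)) (Fin (n+1)) ℂ) (i j : Fin (n+1)) :
    euler n l Δt ρ i j =
      diagCoeff l Δt i j * ρ i j + jumpCoeff l Δt i j * ρ.natEntry (i + l) (j + l) := by
  simp only [euler, Matrix.add_apply, Matrix.smul_apply, Matrix.sub_apply,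
    conjTranspose_ann_pow_mul_ann_pow, diagonal_mul, mul_diagonal,
    ann_pow_mul_mul_conjTranspose_apply, smul_eq_mul, diagCoeff, jumpCoeff]
  push_cast
  ring

lemma natEntry_euler (ρ : Matrix (Fin (n+1)) (Fin (n+1)) ℂ) (k m : ℕ) :
    (euler n l Δt ρ).natEntry k m =
      diagCoeff l Δt k m * ρ.natEntry k m + jumpCoeff l Δt k m * ρ.natEntry (k + l) (m + l) := by
  by_cases h : k < n + 1 ∧ m < n + 1
  · rw [natEntry_of_lt _ h, natEntry_of_lt _ h, euler_apply]
  · rw [natEntry_of_not_lt _ h, natEntry_of_not_lt _ h, natEntry_of_not_lt _ (by omega)]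
    simp

variable {n}

lemma jumpCoeff_nonneg (hΔt : 0 ≤ Δt) (k m : ℕ) : 0 ≤ jumpCoeff l Δt k m := by
  unfold jumpCoeff
  positivity

lemma jumpCoeff_le (hΔt : 0 ≤ Δt) {k m : ℕ} (hk : k ≤ n) (hm : m ≤ n) :
    jumpCoeff l Δt k m ≤ Δt * cfac l (n + l) := by
  calc jumpCoeff l Δt k m ≤ Δt * (√(cfac l (n + l)) * √(cfac l (n + l))) := by
        unfold jumpCoeff
        gcongr <;> exact cfac_mono l (by omega)
    _ = Δt * cfac l (n + l) := by rw [Real.mul_self_sqrt (cfac_nonneg _ _)]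

lemma diagCoeff_of_lt {k m : ℕ} (hk : k < l) (hm : m < l) : diagCoeff l Δt k m = 1 := by
  simp [diagCoeff, cfac_eq_zero_of_lt hk, cfac_eq_zero_of_lt hm]

lemma abs_diagCoeff_sub_one_le (hΔt : 0 ≤ Δt) {k m : ℕ} (hk : k ≤ n) (hm : m ≤ n) :
    |diagCoeff l Δt k m - 1| ≤ Δt * cfac l n := by
  have := cfac_mono l hk
  have := cfac_mono l hm
  rw [diagCoeff, abs_le]
  constructor <;> nlinarith [cfac_nonneg l k, cfac_nonneg l m]

lemma abs_diagCoeff_le (hΔt : 0 ≤ Δt) {k m : ℕ} (hk : k ≤ n) (hm : m ≤ n)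
    (hact : l ≤ k ∨ l ≤ m) : |diagCoeff l Δt k m| ≤ dampingBound l Δt n := by
  have hlow : cfac l l ≤ cfac l k + cfac l m := by
    rcases hact with h | h
    · linarith [cfac_mono l h, cfac_nonneg l m]
    · linarith [cfac_mono l h, cfac_nonneg l k]
  have := cfac_mono l hk
  have := cfac_mono l hm
  rw [diagCoeff, dampingBound, abs_le]
  constructor
  · nlinarith [le_max_right (1 - Δt * cfac l l / 2) (Δt * cfac l n - 1)]
  · nlinarith [le_max_left (1 - Δt * cfac l l / 2) (Δt * cfac l n - 1)]

lemma dampingBound_nonneg (hn : l ≤ n) (hΔt : 0 ≤ Δt) (hCFL : Δt * cfac l n ≤ 2) :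
    0 ≤ dampingBound l Δt n := by
  have := mul_le_mul_of_nonneg_left (cfac_mono l hn) hΔt
  exact le_max_of_le_left (by linarith)

lemma dampingBound_lt_one (hΔt : 0 < Δt) (hCFL : Δt * cfac l n < 2) :
    dampingBound l Δt n < 1 := by
  have := mul_pos hΔt (cfac_pos_of_le le_rfl : 0 < cfac l l)
  exact max_lt (by linarith) (by linarith)

end Euler

lemma le_geometric_of_weighted_recurrence {ι : Type*} {S : Set ι} {σ : ι → ι}
    (hσ : Set.MapsTo σ S S) {x : ℕ → ι → ℝ} {w : ι → ℝ} {q M r B : ℝ} (hq : 0 ≤ q)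
    (hM : 0 ≤ M) (hr : 0 ≤ r) (hB : 0 ≤ B)
    (hx : ∀ p, ∀ i ∈ S, x (p + 1) i ≤ q * x p i + M * x p (σ i))
    (hw : ∀ i ∈ S, q * w i + M * w (σ i) ≤ r * w i) (h0 : ∀ i ∈ S, x 0 i ≤ B * w i) :
    ∀ p, ∀ i ∈ S, x p i ≤ B * r ^ p * w i := by
  intro p
  induction p with
  | zero => simpa using h0
  | succ p ih =>
    intro i hi
    calc x (p + 1) i ≤ q * (B * r ^ p * w i) + M * (B * r ^ p * w (σ i)) := by
          grw [hx p i hi, ih i hi, ih (σ i) (hσ hi)]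
      _ = B * r ^ p * (q * w i + M * w (σ i)) := by ring
      _ ≤ B * r ^ p * (r * w i) := by grw [hw i hi]
      _ = B * r ^ (p + 1) * w i := by ring

lemma exists_pos_le_one_mul_pow_le {M η : ℝ} (hM : 0 ≤ M) (hη : 0 < η) {j : ℕ} (hj : j ≠ 0) :
    ∃ ε : ℝ, 0 < ε ∧ ε ≤ 1 ∧ M * ε ^ j ≤ η := by
  refine ⟨min 1 (η / (M + 1)), by positivity, min_le_left _ _, ?_⟩
  calc M * min 1 (η / (M + 1)) ^ j ≤ M * (η / (M + 1)) := by
        gcongr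
        exact (pow_le_of_le_one (by positivity) (min_le_left _ _) hj).trans (min_le_right _ _)
    _ ≤ η := by
        rw [mul_div_assoc', div_le_iff₀ (by positivity)]
        nlinarith

lemma norm_apply_le_frobNorm {N : ℕ} (A : Matrix (Fin N) (Fin N) ℂ) (i j : Fin N) :
    ‖A i j‖ ≤ frobNorm A := by
  rw [frobNorm, Real.le_sqrt (norm_nonneg _) (by positivity)]
  calc ‖A i j‖ ^ 2 ≤ ∑ j', ‖A i j'‖ ^ 2 :=
        Finset.single_le_sum (f := fun j' => ‖A i j'‖ ^ 2) (fun _ _ => by positivity)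
          (Finset.mem_univ j)
    _ ≤ ∑ i', ∑ j', ‖A i' j'‖ ^ 2 :=
        Finset.single_le_sum (f := fun i' => ∑ j', ‖A i' j'‖ ^ 2) (fun _ _ => by positivity)
          (Finset.mem_univ i)

lemma frobNorm_le_of_forall_norm_le {N : ℕ} {A : Matrix (Fin N) (Fin N) ℂ} {c : ℝ} (hc : 0 ≤ c)
    (hA : ∀ i j, ‖A i j‖ ≤ c) : frobNorm A ≤ N * c := by
  rw [frobNorm, Real.sqrt_le_left (by positivity)]
  calc ∑ i, ∑ j, ‖A i j‖ ^ 2 ≤ ∑ _i : Fin N, ∑ _j : Fin N, c ^ 2 := by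
        gcongr with i _ j _
        exact hA i j
    _ = (N * c) ^ 2 := by simp; ring

lemma exists_limit_of_norm_sub_le_geometric {N : ℕ} {A : ℕ → Matrix (Fin N) (Fin N) ℂ}
    {C r : ℝ} (hC : 0 ≤ C) (hr0 : 0 ≤ r) (hr : r < 1)
    (hA : ∀ p i j, ‖A (p + 1) i j - A p i j‖ ≤ C * r ^ p) :
    ∃ A' : Matrix (Fin N) (Fin N) ℂ, (∀ i j, Tendsto (fun p => A p i j) atTop (𝓝 (A' i j))) ∧
      ∀ p, frobNorm (A p - A') ≤ N * (C / (1 - r)) * r ^ p := by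
  have hstep (i j : Fin N) (p : ℕ) : dist (A p i j) (A (p + 1) i j) ≤ C * r ^ p := by
    rw [dist_comm, dist_eq_norm]
    exact hA p i j
  choose A' hA' using fun i j =>
    cauchySeq_tendsto_of_complete (cauchySeq_of_le_geometric r C hr (hstep i j))
  refine ⟨Matrix.of A', hA', fun p => ?_⟩
  have hentry (i j : Fin N) : ‖(A p - Matrix.of A') i j‖ ≤ C * r ^ p / (1 - r) := by
    rw [Matrix.sub_apply, Matrix.of_apply, ← dist_eq_norm]
    exact dist_le_of_le_geometric_of_tendsto r C hr (hstep i j) (hA' i j) p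
  calc frobNorm (A p - Matrix.of A') ≤ N * (C * r ^ p / (1 - r)) :=
        frobNorm_le_of_forall_norm_le (div_nonneg (by positivity) (sub_nonneg.2 hr.le)) hentry
    _ = N * (C / (1 - r)) * r ^ p := by ring

section Stability

variable {n l : ℕ} {Δt : ℝ}

lemma norm_natEntry_euler_le (hΔt : 0 ≤ Δt)
    (ρ : Matrix (Fin (n+1)) (Fin (n+1)) ℂ) {k m : ℕ} (hact : l ≤ k ∨ l ≤ m) :
    ‖(euler n l Δt ρ).natEntry k m‖ ≤ dampingBound l Δt n * ‖ρ.natEntry k m‖ +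
      Δt * cfac l (n + l) * ‖ρ.natEntry (k + l) (m + l)‖ := by
  by_cases h : k ≤ n ∧ m ≤ n
  · rw [natEntry_euler]
    grw [norm_add_le, norm_mul, norm_mul, Complex.norm_real, Complex.norm_real, Real.norm_eq_abs,
      Real.norm_of_nonneg (jumpCoeff_nonneg hΔt _ _), abs_diagCoeff_le hΔt h.1 h.2 hact,
      jumpCoeff_le hΔt h.1 h.2]
  · have hkm : ¬(k < n + 1 ∧ m < n + 1) := by omega
    rw [natEntry_of_not_lt _ hkm, natEntry_of_not_lt _ hkm, natEntry_of_not_lt _ (by omega)]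
    simp

lemma norm_natEntry_euler_sub_le (hΔt : 0 ≤ Δt) (hCFL : Δt * cfac l n ≤ 2)
    (ρ : Matrix (Fin (n+1)) (Fin (n+1)) ℂ) {a : ℝ}
    (ha : ∀ k m, (l ≤ k ∨ l ≤ m) → ‖ρ.natEntry k m‖ ≤ a) (k m : ℕ) :
    ‖(euler n l Δt ρ).natEntry k m - ρ.natEntry k m‖ ≤ (2 + Δt * cfac l (n + l)) * a := by
  have ha0 : 0 ≤ a := (norm_nonneg _).trans (ha l l (Or.inl le_rfl))
  by_cases h : k ≤ n ∧ m ≤ n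
  · have hdiag : ‖((diagCoeff l Δt k m - 1 : ℝ) : ℂ) * ρ.natEntry k m‖ ≤ 2 * a := by
      by_cases hact : l ≤ k ∨ l ≤ m
      · rw [norm_mul, Complex.norm_real, Real.norm_eq_abs]
        exact mul_le_mul ((abs_diagCoeff_sub_one_le hΔt h.1 h.2).trans hCFL) (ha k m hact)
          (norm_nonneg _) zero_le_two
      · rw [diagCoeff_of_lt (by omega) (by omega)]
        simpa using ha0
    have hjump : ‖(jumpCoeff l Δt k m : ℂ) * ρ.natEntry (k + l) (m + l)‖ ≤
        Δt * cfac l (n + l) * a := by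
      rw [norm_mul, Complex.norm_real, Real.norm_of_nonneg (jumpCoeff_nonneg hΔt _ _)]
      exact mul_le_mul (jumpCoeff_le hΔt h.1 h.2) (ha _ _ (Or.inl (Nat.le_add_left _ _)))
        (norm_nonneg _) (mul_nonneg hΔt (cfac_nonneg _ _))
    have hsplit : (euler n l Δt ρ).natEntry k m - ρ.natEntry k m =
        ((diagCoeff l Δt k m - 1 : ℝ) : ℂ) * ρ.natEntry k m +
          (jumpCoeff l Δt k m : ℂ) * ρ.natEntry (k + l) (m + l) := by
      rw [natEntry_euler]
      push_cast
      ring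
    rw [hsplit]
    exact (norm_add_le _ _).trans (by linarith)
  · rw [natEntry_of_not_lt _ (by omega), natEntry_of_not_lt _ (by omega), sub_zero, norm_zero]
    have := mul_nonneg hΔt (cfac_nonneg l (n + l))
    positivity

theorem exists_norm_natEntry_euler_iterate_le (hl : 1 ≤ l) (hn : l ≤ n) (hΔt : 0 < Δt)
    (hCFL : Δt * cfac l n < 2) (ρ₀ : Matrix (Fin (n+1)) (Fin (n+1)) ℂ) :
    ∃ B r : ℝ, 0 ≤ B ∧ 0 ≤ r ∧ r < 1 ∧ ∀ p k m, (l ≤ k ∨ l ≤ m) →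
      ‖((euler n l Δt)^[p] ρ₀).natEntry k m‖ ≤ B * r ^ p := by
  set q := dampingBound l Δt n
  set M := Δt * cfac l (n + l)
  have hq0 : 0 ≤ q := dampingBound_nonneg hn hΔt.le hCFL.le
  have hq1 : q < 1 := dampingBound_lt_one hΔt hCFL
  have hM : 0 ≤ M := mul_nonneg hΔt.le (cfac_nonneg _ _)
  obtain ⟨ε, hε0, hε1, hεM⟩ :=
    exists_pos_le_one_mul_pow_le hM (by linarith : 0 < (1 - q) / 2) (j := 2 * l) (by omega)
  set B := frobNorm ρ₀ / ε ^ (2 * n)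
  have hB : 0 ≤ B := div_nonneg (Real.sqrt_nonneg _) (by positivity)
  refine ⟨B, (1 + q) / 2, hB, by linarith, by linarith, fun p k m hact => ?_⟩
  have hweighted := le_geometric_of_weighted_recurrence (S := {i : ℕ × ℕ | l ≤ i.1 ∨ l ≤ i.2})
    (σ := fun i => (i.1 + l, i.2 + l))
    (x := fun p i => ‖((euler n l Δt)^[p] ρ₀).natEntry i.1 i.2‖) (w := fun i => ε ^ (i.1 + i.2))
    (r := (1 + q) / 2) (B := B) (fun _ _ => Or.inl (Nat.le_add_left _ _)) hq0 hM (by linarith)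
    hB ?step ?weight ?init p (k, m) hact
  · exact hweighted.trans (mul_le_of_le_one_right (by positivity) (pow_le_one₀ hε0.le hε1))
  case step =>
    intro p i hi
    simp only [Function.iterate_succ_apply']
    exact norm_natEntry_euler_le hΔt.le _ hi
  case weight =>
    rintro ⟨k, m⟩ -
    calc q * ε ^ (k + m) + M * ε ^ (k + l + (m + l)) = (q + M * ε ^ (2 * l)) * ε ^ (k + m) := by
          ring
      _ ≤ (1 + q) / 2 * ε ^ (k + m) := by gcongr; linarith
  case init =>
    rintro ⟨k, m⟩ -
    by_cases h : k ≤ n ∧ m ≤ n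
    · calc ‖ρ₀.natEntry k m‖ ≤ frobNorm ρ₀ := by
            rw [natEntry_of_lt _ (by omega)]
            exact norm_apply_le_frobNorm _ _ _
        _ = B * ε ^ (2 * n) := (div_mul_cancel₀ _ (by positivity)).symm
        _ ≤ B * ε ^ (k + m) :=
            mul_le_mul_of_nonneg_left (pow_le_pow_of_le_one hε0.le hε1 (by omega)) hB
    · rw [natEntry_of_not_lt _ (by omega), norm_zero]
      positivity

end Stability

/-- Stability of the explicit Euler scheme below the CFL threshold: if `Δt c_n < 2`, every
initial matrix `ρ₀` gives iterates converging at a geometric rate to a limit `ρ∞` supported on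
the indices `< l`. -/
theorem stmt2 (l n : ℕ) (hl : 1 ≤ l) (hn : l ≤ n) (Δt : ℝ) (hΔt : 0 < Δt)
    (hCFL : Δt * cfac l n < 2)
    (ρ₀ : Matrix (Fin (n+1)) (Fin (n+1)) ℂ) :
    ∃ ρ' : Matrix (Fin (n+1)) (Fin (n+1)) ℂ,
      (∀ k m : Fin (n+1), (l ≤ (k : ℕ) ∨ l ≤ (m : ℕ)) → ρ' k m = 0) ∧
      ∃ C : ℝ, 0 ≤ C ∧ ∃ r : ℝ, 0 ≤ r ∧ r < 1 ∧
        ∀ p : ℕ, frobNorm ((euler n l Δt)^[p] ρ₀ - ρ') ≤ C * r ^ p := by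
  obtain ⟨B, r, hB, hr0, hr1, hdecay⟩ := exists_norm_natEntry_euler_iterate_le hl hn hΔt hCFL ρ₀
  have hC : 0 ≤ (2 + Δt * cfac l (n + l)) * B :=
    mul_nonneg (by linarith [mul_nonneg hΔt.le (cfac_nonneg l (n + l))]) hB
  obtain ⟨ρ', hlim, hbound⟩ := exists_limit_of_norm_sub_le_geometric
    (A := fun p => (euler n l Δt)^[p] ρ₀) hC hr0 hr1 fun p i j => by
      simpa [Function.iterate_succ_apply', mul_assoc] using
        norm_natEntry_euler_sub_le hΔt.le hCFL.le _ (hdecay p) i j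
  refine ⟨ρ', fun i j hact => ?_, _, mul_nonneg (Nat.cast_nonneg _)
    (div_nonneg hC (sub_nonneg.2 hr1.le)), r, hr0, hr1, hbound⟩
  have hactive_to_zero : Tendsto (fun p => ((euler n l Δt)^[p] ρ₀) i j) atTop (𝓝 0) :=
    squeeze_zero_norm (fun p => by simpa using hdecay p i j hact)
      (by simpa using (tendsto_pow_atTop_nhds_zero_of_lt_one hr0 hr1).const_mul B)
  exact tendsto_nhds_unique (hlim i j) hactive_to_zero
end

section
/- Lyapunov-type operator inequality for the truncated l-photon loss channel: with L = a^l the truncated l-fold annihilation matrix and Q = LᴴL, one has, in the Loewner order, Lᴴ (I + Q)⁴ L ≤ Q (I + Q)⁴; equivalently, Lᴴ·((I+Q)⁴·L − L·(I+Q)⁴) is negative semidefinite (this verifies the a priori estimate assumption 𝓛*(Λ⁴) ≤ 0 with Λ = I + Q for the l-photon loss dynamics). -/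
open Matrix
open scoped ComplexOrder

lemma ann_pow (n l : ℕ) :
    ann n ^ l = Matrix.of (fun i j : Fin (n+1) =>
      if (i : ℕ) + l = (j : ℕ) then ((Real.sqrt ((j:ℕ).descFactorial l) : ℝ) : ℂ) else 0) := by
  induction l with
  | zero =>
    ext i j
    simp [Matrix.one_apply, Fin.ext_iff, Nat.descFactorial_zero]
  | succ l ih =>
    ext i j
    rw [pow_succ', ih, Matrix.mul_apply]
    simp only [ann, Matrix.of_apply]
    by_cases h : (i:ℕ) + (l+1) = (j:ℕ)
    · have hi1 : (i:ℕ) + 1 < n + 1 := by omega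
      rw [Finset.sum_eq_single (⟨(i:ℕ)+1, hi1⟩ : Fin (n+1))]
      · have h2 : ((⟨(i:ℕ)+1, hi1⟩ : Fin (n+1)) : ℕ) + l = (j:ℕ) := by
          simp; omega
        simp only [Fin.val_mk, if_pos rfl, if_pos h2, if_pos h, if_true]
        rw [← Complex.ofReal_mul, ← Real.sqrt_mul (by positivity)]
        congr 2
        rw [Nat.descFactorial_succ]
        have hlj : l ≤ (j:ℕ) := by omega
        push_cast [hlj]
        have : ((i:ℕ) : ℝ) + 1 = ((j:ℕ) : ℝ) - l := by
          have h' : ((i:ℕ) : ℝ) + (l+1) = ((j:ℕ) : ℝ) := by exact_mod_cast h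
          linarith
        rw [this]
      · intro k _ hk
        have : ¬ ((i:ℕ) + 1 = (k:ℕ)) := by
          intro hc; apply hk; simp [Fin.ext_iff]; omega
        simp [this]
      · intro hmem; exact absurd (Finset.mem_univ _) hmem
    · rw [if_neg h]
      apply Finset.sum_eq_zero
      intro k _
      by_cases h1 : (i:ℕ) + 1 = (k:ℕ)
      · have : ¬ ((k:ℕ) + l = (j:ℕ)) := by omega
        simp [this]
      · simp [h1]

lemma key (n l : ℕ) (g : Fin (n+1) → ℂ) :
    (ann n ^ l)ᴴ * (Matrix.diagonal g * (ann n ^ l)) =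
    Matrix.diagonal (fun i : Fin (n+1) =>
      (((i:ℕ).descFactorial l : ℝ) : ℂ) * g ⟨(i:ℕ) - l, by omega⟩) := by
  ext i j
  rw [Matrix.mul_apply]
  simp only [ann_pow, Matrix.conjTranspose_apply, Matrix.of_apply, Matrix.diagonal_mul,
    Matrix.diagonal_apply]
  by_cases hij : i = j
  · subst hij
    rw [if_pos rfl]
    by_cases hli : l ≤ (i:ℕ)
    · have hk0 : (i:ℕ) - l < n + 1 := by omega
      rw [Finset.sum_eq_single (⟨(i:ℕ) - l, hk0⟩ : Fin (n+1))]
      · have hc : ((⟨(i:ℕ) - l, hk0⟩ : Fin (n+1)) : ℕ) + l = (i:ℕ) := by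
          simp; omega
        simp only [if_pos hc]
        rw [Complex.star_def, Complex.conj_ofReal]
        have : ((Real.sqrt ((i:ℕ).descFactorial l) : ℝ) : ℂ) *
            ((Real.sqrt ((i:ℕ).descFactorial l) : ℝ) : ℂ) =
            (((i:ℕ).descFactorial l : ℝ) : ℂ) := by
          rw [← Complex.ofReal_mul, Real.mul_self_sqrt (by positivity)]
        rw [mul_comm (g _), ← mul_assoc, this]
      · intro k _ hk
        have : ¬ ((k:ℕ) + l = (i:ℕ)) := by
          intro hc; apply hk; simp [Fin.ext_iff]; omega
        simp [this]
      · intro hmem; exact absurd (Finset.mem_univ _) hmem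
    · have hz : (i:ℕ).descFactorial l = 0 :=
        Nat.descFactorial_eq_zero_iff_lt.mpr (by omega)
      rw [hz]
      push_cast
      rw [zero_mul]
      apply Finset.sum_eq_zero
      intro k _
      have : ¬ ((k:ℕ) + l = (i:ℕ)) := by omega
      simp [this]
  · rw [if_neg hij]
    apply Finset.sum_eq_zero
    intro k _
    by_cases h1 : (k:ℕ) + l = (i:ℕ)
    · have : ¬ ((k:ℕ) + l = (j:ℕ)) := by
        intro hc; apply hij; exact Fin.ext (by omega)
      simp [this]
    · simp [h1]

/-- Lyapunov-type operator inequality for the truncated `l`-photon loss channel: with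
`L = a^l` and `Q = LᴴL`, one has `Lᴴ (I + Q)⁴ L ≤ Q (I + Q)⁴` in the Loewner order;
equivalently `Lᴴ ((I+Q)⁴ L − L (I+Q)⁴)` is negative semidefinite. -/
theorem stmt16 (l n : ℕ) (hl : 1 ≤ l) (hn : l ≤ n)
    (L : Matrix (Fin (n+1)) (Fin (n+1)) ℂ) (hL : L = ann n ^ l)
    (Q : Matrix (Fin (n+1)) (Fin (n+1)) ℂ) (hQ : Q = Lᴴ * L) :
    (Q * (1 + Q) ^ 4 - Lᴴ * (1 + Q) ^ 4 * L).PosSemidef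
    ∧ (-(Lᴴ * ((1 + Q) ^ 4 * L - L * (1 + Q) ^ 4))).PosSemidef := by
  set d : Fin (n+1) → ℂ := fun i => (((i:ℕ).descFactorial l : ℝ) : ℂ) with hd
  have hQd : Q = Matrix.diagonal d := by
    have h := key n l (fun _ => 1)
    simp only [Matrix.diagonal_one, Matrix.one_mul, mul_one] at h
    rw [hQ, hL, h]
  have hpow : (1 + Q) ^ 4 = Matrix.diagonal (fun i => (1 + d i) ^ 4) := by
    rw [hQd, ← Matrix.diagonal_one, Matrix.diagonal_add, Matrix.diagonal_pow]
    rfl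
  have hright : Lᴴ * (1 + Q) ^ 4 * L =
      Matrix.diagonal (fun i : Fin (n+1) =>
        d i * (1 + d ⟨(i:ℕ) - l, by omega⟩) ^ 4) := by
    rw [Matrix.mul_assoc, hpow, hL, key n l (fun k => (1 + d k) ^ 4)]
  have hleft : Q * (1 + Q) ^ 4 =
      Matrix.diagonal (fun i => d i * (1 + d i) ^ 4) := by
    rw [hpow, hQd, Matrix.diagonal_mul_diagonal]
  have hmain : (Q * (1 + Q) ^ 4 - Lᴴ * (1 + Q) ^ 4 * L).PosSemidef := by
    rw [hleft, hright, Matrix.diagonal_sub]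
    rw [Matrix.posSemidef_diagonal_iff]
    intro i
    set A : ℕ := (i:ℕ).descFactorial l with hA
    set B : ℕ := ((i:ℕ) - l).descFactorial l with hB
    have hBA : B ≤ A := Nat.descFactorial_le _ (Nat.sub_le _ _)
    have heq : d i * (1 + d i) ^ 4 - d i * (1 + d ⟨(i:ℕ) - l, by omega⟩) ^ 4 =
        ((((A : ℝ) * (1 + A) ^ 4 - A * (1 + B) ^ 4 : ℝ)) : ℂ) := by
      simp only [hd]
      push_cast
      try ring
    rw [heq, Complex.zero_le_real, sub_nonneg]
    have hBA' : (B : ℝ) ≤ (A : ℝ) := Nat.cast_le.mpr hBA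
    have h1 : (0:ℝ) ≤ (A:ℝ) := Nat.cast_nonneg _
    have h2 : (0:ℝ) ≤ (B:ℝ) := Nat.cast_nonneg _
    exact mul_le_mul_of_nonneg_left (pow_le_pow_left₀ (by linarith) (by linarith) 4) h1
  refine ⟨hmain, ?_⟩
  have hrw : -(Lᴴ * ((1 + Q) ^ 4 * L - L * (1 + Q) ^ 4)) =
      Q * (1 + Q) ^ 4 - Lᴴ * (1 + Q) ^ 4 * L := by
    rw [hQ]
    noncomm_ring
  rw [hrw]
  exact hmain
end
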